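/- arXiv:1112.1228 — 9 statements merged into one kernel-verified Lean document; each statement's English description precedes it below -/
import Mathlib

section
/- Let p be a prime. Then β_p(k) = k·p for every k with 1 ≤ k ≤ p, and β_p(k) < k·p for every k > p. -/
/-!
Legendre's formula gives `α_p(p n + r) = α_p(n) + n` for `0 ≤ r < p`; since `α_p` is monotone,
`β_p(k) ≤ m ↔ k ≤ α_p(m)`.
For `1 ≤ k ≤ p` we have `α_p(k - 1) = 0`, so `α_p(k p - 1) = k - 1 < k ≤ α_p(k p)`, i.e. `β_p(k) = k p`.
For `k > p` we have `α_p(k - 1) ≥ 1`, so already `α_p((k - 1) p) ≥ k`.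
-/

/-- `α_p(n)`: the `p`-adic valuation of `n!`
(equivalently `Σ_{k ≥ 1} ⌊n / p^k⌋`). -/
def alphaP (p n : ℕ) : ℕ := padicValNat p (Nat.factorial n)

/-- `β_p(n)`: the least `m` with `α_p(m) ≥ n`. -/
noncomputable def betaP (p n : ℕ) : ℕ := sInf {m | n ≤ alphaP p m}

section

variable {p : ℕ} [hp : Fact p.Prime]

lemma alphaP_mono {m n : ℕ} (h : m ≤ n) : alphaP p m ≤ alphaP p n :=
  (padicValNat_dvd_iff_le (Nat.factorial_ne_zero n)).mp
    (pow_padicValNat_dvd.trans (Nat.factorial_dvd_factorial h))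

lemma alphaP_mul_add {r : ℕ} (n : ℕ) (hr : r < p) : alphaP p (p * n + r) = alphaP p n + n := by
  rw [alphaP, padicValNat_factorial_mul_add n hr, padicValNat_factorial_mul, alphaP]

lemma alphaP_eq_zero_of_lt {n : ℕ} (h : n < p) : alphaP p n = 0 :=
  padicValNat.eq_zero_of_not_dvd fun hdvd => (hp.out.dvd_factorial.mp hdvd).not_gt h

lemma one_le_alphaP_of_le {n : ℕ} (h : p ≤ n) : 1 ≤ alphaP p n :=
  one_le_padicValNat_of_dvd (Nat.factorial_ne_zero n) (hp.out.dvd_factorial.mpr h)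

lemma alphaP_mul (n : ℕ) : alphaP p (p * n) = alphaP p n + n := by
  simpa using alphaP_mul_add n hp.out.pos

lemma le_alphaP_mul (k : ℕ) : k ≤ alphaP p (p * k) :=
  (alphaP_mul (p := p) k).symm ▸ Nat.le_add_left k (alphaP p k)

lemma betaP_le_iff {k m : ℕ} : betaP p k ≤ m ↔ k ≤ alphaP p m := by
  refine ⟨fun h => ?_, fun h => Nat.sInf_le h⟩
  have hmem : k ≤ alphaP p (betaP p k) :=
    Nat.sInf_mem (s := {m | k ≤ alphaP p m}) ⟨p * k, le_alphaP_mul k⟩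
  exact hmem.trans (alphaP_mono h)

lemma lt_betaP_iff {k m : ℕ} : m < betaP p k ↔ alphaP p m < k := by
  rw [← not_le, betaP_le_iff, not_le]

lemma betaP_eq_mul_of_le {k : ℕ} (hk : 1 ≤ k) (hkp : k ≤ p) : betaP p k = k * p := by
  obtain ⟨j, rfl⟩ := Nat.exists_eq_add_of_le' hk
  have hbelow : p * j + (p - 1) < betaP p (j + 1) := by
    rw [lt_betaP_iff, alphaP_mul_add j (Nat.sub_lt hp.out.pos one_pos),
      alphaP_eq_zero_of_lt (by omega)]
    omega
  have habove : betaP p (j + 1) ≤ (j + 1) * p := by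
    rw [betaP_le_iff, mul_comm]
    exact le_alphaP_mul (j + 1)
  have hsucc : (j + 1) * p = p * j + (p - 1) + 1 := by
    have := hp.out.pos
    rw [add_mul, one_mul, mul_comm]
    omega
  omega

lemma betaP_le_pred_mul_of_lt {k : ℕ} (hk : p < k) : betaP p k ≤ (k - 1) * p := by
  rw [betaP_le_iff, mul_comm, alphaP_mul]
  have := one_le_alphaP_of_le (p := p) (Nat.le_sub_one_of_lt hk)
  omega

end

/-- For `1 ≤ k ≤ p` one has `β_p(k) = k·p`, and for `k > p` one has
`β_p(k) < k·p`. -/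
theorem betaP_eq_mul_of_le_and_lt_of_gt (p : ℕ) (hp : p.Prime) :
    (∀ k : ℕ, 1 ≤ k → k ≤ p → betaP p k = k * p) ∧
    (∀ k : ℕ, p < k → betaP p k < k * p) := by
  have : Fact p.Prime := ⟨hp⟩
  refine ⟨fun k hk hkp => betaP_eq_mul_of_le hk hkp, fun k hk => ?_⟩
  calc betaP p k ≤ (k - 1) * p := betaP_le_pred_mul_of_lt hk
    _ < k * p := Nat.mul_lt_mul_of_pos_right (by omega) hp.pos
end

section
/- Let p be a prime, n ≥ 1, and let f ∈ ℤ[x] be written in the falling-factorial basis as f = Σ_k a_k·(x)_k. Then f(a) ≡ 0 (mod p^n) for every integer a if and only if a_k ≡ 0 (mod p^{n−α_p(k)}) for every k with α_p(k) < n (equivalently, p^{max(n−α_p(k),0)} divides a_k for all k). -/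
open Nat Polynomial Finset

lemma pow_alphaP_dvd_descPochhammer_eval (p k : ℕ) (x : ℤ) :
    (p : ℤ) ^ alphaP p k ∣ (descPochhammer ℤ k).eval x := by
  have hfac : (k ! : ℤ) ∣ (descPochhammer ℤ k).eval x := by
    rw [eval_eq_smeval, Ring.descPochhammer_eq_factorial_smul_choose, nsmul_eq_mul]
    exact dvd_mul_right _ _
  exact (Int.natCast_dvd_natCast.mpr pow_padicValNat_dvd).trans hfac

lemma pow_dvd_mul_descPochhammer_eval {p n k : ℕ} {c : ℤ} (hc : (p : ℤ) ^ (n - alphaP p k) ∣ c)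
    (x : ℤ) : (p : ℤ) ^ n ∣ c * (descPochhammer ℤ k).eval x :=
  calc (p : ℤ) ^ n ∣ (p : ℤ) ^ (n - alphaP p k + alphaP p k) := pow_dvd_pow _ le_tsub_add
    _ = (p : ℤ) ^ (n - alphaP p k) * (p : ℤ) ^ alphaP p k := pow_add _ _ _
    _ ∣ c * (descPochhammer ℤ k).eval x :=
      mul_dvd_mul hc (pow_alphaP_dvd_descPochhammer_eval p k x)

lemma pow_sub_alphaP_dvd_of_pow_dvd_mul_factorial {p n k : ℕ} {c : ℤ} (hp : p.Prime)
    (h : (p : ℤ) ^ n ∣ c * k !) : (p : ℤ) ^ (n - alphaP p k) ∣ c := by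
  obtain hle | hlt := le_or_gt n (alphaP p k)
  · simp [Nat.sub_eq_zero_of_le hle]
  obtain ⟨m, hsplit, hm⟩ : ∃ m, k ! = p ^ alphaP p k * m ∧ ¬ p ∣ m := by
    rw [alphaP, ← Nat.factorization_def _ hp]
    exact ⟨_, (Nat.ordProj_mul_ordCompl_eq_self _ p).symm,
      Nat.not_dvd_ordCompl hp (factorial_ne_zero k)⟩
  replace h : (p : ℤ) ^ n ∣ m * (c * p ^ alphaP p k) := by
    rw [hsplit] at h
    push_cast at h
    convert h using 1
    ring
  have hcompl : ¬ (p : ℤ) ∣ m := Int.natCast_dvd_natCast.not.mpr hm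
  have h' := (Nat.prime_iff_prime_int.mp hp).pow_dvd_of_dvd_mul_left n hcompl h
  rw [← Nat.sub_add_cancel hlt.le, pow_add] at h'
  exact (mul_dvd_mul_iff_right (pow_ne_zero _ (by exact_mod_cast hp.ne_zero))).mp h'

lemma descPochhammer_eval_natCast_eq_zero_of_lt {k m : ℕ} (h : k < m) :
    (descPochhammer ℤ m).eval (k : ℤ) = 0 := by
  rw [descPochhammer_eval_eq_descFactorial, descFactorial_eq_zero_iff_lt.mpr h, cast_zero]

lemma sum_mul_descPochhammer_eval_natCast {N k : ℕ} (hk : k < N) (a : ℕ → ℤ) :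
    ∑ m ∈ range N, a m * (descPochhammer ℤ m).eval (k : ℤ) =
      ∑ m ∈ range k, a m * (descPochhammer ℤ m).eval (k : ℤ) + a k * k ! := by
  rw [← sum_subset (range_subset_range.mpr hk), sum_range_succ,
    descPochhammer_eval_eq_descFactorial, descFactorial_self]
  intro m _ hmk
  rw [descPochhammer_eval_natCast_eq_zero_of_lt (by simpa using hmk), mul_zero]

theorem zero_function_mod_pn_iff_general (p : ℕ) (hp : p.Prime) (n : ℕ)
    (N : ℕ) (a : ℕ → ℤ) (f : Polynomial ℤ)
    (hf : f = ∑ k ∈ Finset.range N, Polynomial.C (a k) * descPochhammer ℤ k) :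
    (∀ x : ℤ, (p : ℤ) ^ n ∣ f.eval x) ↔
      ∀ k < N, (p : ℤ) ^ (n - alphaP p k) ∣ a k := by
  have heval (x : ℤ) : f.eval x = ∑ k ∈ range N, a k * (descPochhammer ℤ k).eval x := by
    simp only [hf, eval_finsetSum, eval_mul, eval_C]
  constructor
  · intro hzero k
    induction k using Nat.strong_induction_on with
    | _ k ih =>
      intro hk
      have hlower : (p : ℤ) ^ n ∣ ∑ m ∈ range k, a m * (descPochhammer ℤ m).eval (k : ℤ) :=
        dvd_sum fun m hm ↦ pow_dvd_mul_descPochhammer_eval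
          (ih m (mem_range.mp hm) ((mem_range.mp hm).trans hk)) _
      have htop : (p : ℤ) ^ n ∣ a k * k ! := by
        have hfk := hzero k
        rw [heval, sum_mul_descPochhammer_eval_natCast hk] at hfk
        exact (dvd_add_right hlower).mp hfk
      exact pow_sub_alphaP_dvd_of_pow_dvd_mul_factorial hp htop
  · intro h x
    rw [heval]
    exact dvd_sum fun k hk ↦ pow_dvd_mul_descPochhammer_eval (h k (mem_range.mp hk)) x

/-- A polynomial `f ∈ ℤ[x]`, written in the falling-factorial basis as
`f = Σ_k a_k (x)_k`, induces the zero function mod `p^n` (i.e. `p^n ∣ f(a)`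
for every integer `a`) if and only if `p^{max(n - α_p(k), 0)} ∣ a_k`
for every `k` (here `n - alphaP p k` is truncated subtraction on `ℕ`). -/
theorem zero_function_mod_pn_iff (p : ℕ) (hp : p.Prime) (n : ℕ) (hn : 1 ≤ n)
    (N : ℕ) (a : ℕ → ℤ) (f : Polynomial ℤ)
    (hf : f = ∑ k ∈ Finset.range N, Polynomial.C (a k) * descPochhammer ℤ k) :
    (∀ x : ℤ, (p : ℤ) ^ n ∣ f.eval x) ↔
      ∀ k < N, (p : ℤ) ^ (n - alphaP p k) ∣ a k :=
  zero_function_mod_pn_iff_general p hp n N a f hf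
end

section
/- Let p be a prime and n ≥ 1. Every polynomial function on ℤ/p^nℤ is represented by exactly one polynomial f ∈ ℤ[x] of the form f = Σ_{k=0}^{β_p(n)−1} a_k·(x)_k with integer coefficients satisfying 0 ≤ a_k < p^{n−α_p(k)} for all k. -/
open Polynomial Finset Nat

theorem Polynomial.exists_eq_sum_C_mul_descPochhammer {R : Type*} [Ring R] [Nontrivial R]
    [NoZeroDivisors R] : ∀ {N : ℕ} (f : R[X]), f.degree < N →
      ∃ b : ℕ → R, f = ∑ k ∈ range N, C (b k) * descPochhammer R k
  | 0, f, hf => ⟨0, by simpa using hf⟩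
  | N + 1, f, hf => by
    have hlower : (f - C (f.coeff N) * descPochhammer R N).degree < N := by
      rw [degree_lt_iff_coeff_zero] at hf ⊢
      intro m hm
      have hlead : (descPochhammer R N).coeff N = 1 := by
        simpa only [descPochhammer_natDegree] using (monic_descPochhammer R N).coeff_natDegree
      rw [coeff_sub, coeff_C_mul]
      obtain rfl | hNm := hm.eq_or_lt
      · rw [hlead, mul_one, sub_self]
      · rw [hf m hNm, coeff_eq_zero_of_natDegree_lt (p := descPochhammer R N)
          (by rwa [descPochhammer_natDegree]), mul_zero, sub_zero]
    obtain ⟨b, hb⟩ := exists_eq_sum_C_mul_descPochhammer _ hlower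
    refine ⟨Function.update b N (f.coeff N), ?_⟩
    rw [sum_range_succ, Function.update_self,
      sum_congr rfl fun k hk => by rw [Function.update_of_ne (mem_range.1 hk).ne], ← hb,
      sub_add_cancel]

theorem forall_dvd_sum_mul_descFactorial_iff {R : Type*} [CommRing R] {q : R} {d : ℕ → R}
    {N : ℕ} :
    (∀ m : ℕ, q ∣ ∑ k ∈ range N, d k * m.descFactorial k) ↔ ∀ k < N, q ∣ d k * k ! := by
  have hterm : ∀ k m : ℕ, q ∣ d k * k ! → q ∣ d k * m.descFactorial k := fun k m h => by
    rw [descFactorial_eq_factorial_mul_choose, cast_mul, ← mul_assoc]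
    exact h.mul_right _
  refine ⟨fun h k => ?_, fun h m => dvd_sum fun k hk => hterm k m (h k (mem_range.1 hk))⟩
  induction k using Nat.strong_induction_on with
  | _ k ih =>
    intro hk
    -- evaluating at `m = k` kills the terms `j > k`, and the terms `j < k` are known multiples
    have hothers : q ∣ ∑ j ∈ (range N).erase k, d j * k.descFactorial j := by
      refine dvd_sum fun j hj => ?_
      obtain hjk | hkj := lt_or_gt_of_ne (ne_of_mem_erase hj)
      · exact hterm j k (ih j hjk (hjk.trans hk))
      · simp [descFactorial_eq_zero_iff_lt.2 hkj]
    have hsum := h k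
    rw [← add_sum_erase _ _ (mem_range.2 hk), descFactorial_self] at hsum
    exact (dvd_add_left hothers).1 hsum

section

variable {p : ℕ}

theorem alphaP_mono_s2 (hp : p.Prime) : Monotone (alphaP p) := fun j k hjk => by
  have := Fact.mk hp
  exact (padicValNat_dvd_iff_le (factorial_ne_zero k)).1
    ((pow_padicValNat_dvd).trans (factorial_dvd_factorial hjk))

theorem le_alphaP_betaP (hp : p.Prime) (n : ℕ) : n ≤ alphaP p (betaP p n) := by
  have := Fact.mk hp
  refine Nat.sInf_mem (s := {m | n ≤ alphaP p m}) ⟨p ^ n, ?_⟩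
  exact (padicValNat_dvd_iff_le (factorial_ne_zero _)).1
    (dvd_factorial (pow_pos hp.pos n) le_rfl)

theorem sub_alphaP_eq_zero_of_betaP_le (hp : p.Prime) {n k : ℕ} (hk : betaP p n ≤ k) :
    n - alphaP p k = 0 :=
  Nat.sub_eq_zero_of_le ((le_alphaP_betaP hp n).trans (alphaP_mono_s2 hp hk))

theorem eq_zero_of_betaP_le (hp : p.Prime) {n k : ℕ} (hk : betaP p n ≤ k) {c : ℤ} (hc₀ : 0 ≤ c)
    (hc : c < (p : ℤ) ^ (n - alphaP p k)) : c = 0 := by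
  rw [sub_alphaP_eq_zero_of_betaP_le hp hk, pow_zero] at hc
  omega

theorem pow_dvd_mul_factorial_iff (hp : p.Prime) {n k : ℕ} {c : ℤ} :
    (p : ℤ) ^ n ∣ c * k ! ↔ (p : ℤ) ^ (n - alphaP p k) ∣ c := by
  have := Fact.mk hp
  rcases eq_or_ne c 0 with rfl | hc
  · simp
  have hk : (k ! : ℤ) ≠ 0 := cast_ne_zero.2 (factorial_ne_zero k)
  rw [padicValInt_dvd_iff, padicValInt_dvd_iff, or_iff_right (mul_ne_zero hc hk), or_iff_right hc,
    padicValInt.mul hc hk, padicValInt.of_nat, alphaP]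
  omega

theorem ZMod.aeval_fun_eq_iff {N : ℕ} [NeZero N] {f F : ℤ[X]} :
    ((fun x : ZMod N => aeval x f) = fun x => aeval x F) ↔
      ∀ m : ℕ, (N : ℤ) ∣ (f - F).eval (m : ℤ) := by
  rw [funext_iff, ZMod.natCast_zmod_surjective.forall]
  refine forall_congr' fun m => ?_
  rw [← Int.cast_natCast, aeval_def, aeval_def, eval₂_at_intCast, eval₂_at_intCast,
    algebraMap_int_eq, eq_intCast, eq_intCast, Int.cast_id, ZMod.intCast_eq_intCast_iff_dvd_sub,
    eval_sub, ← dvd_neg, neg_sub]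

theorem aeval_sum_descPochhammer_eq_iff (hp : p.Prime) {n N : ℕ} {d e : ℕ → ℤ} :
    ((fun x : ZMod (p ^ n) => aeval x (∑ k ∈ range N, C (d k) * descPochhammer ℤ k)) =
      fun x => aeval x (∑ k ∈ range N, C (e k) * descPochhammer ℤ k)) ↔
    ∀ k < N, (p : ℤ) ^ (n - alphaP p k) ∣ d k - e k := by
  have : NeZero (p ^ n) := ⟨pow_ne_zero n hp.ne_zero⟩
  rw [ZMod.aeval_fun_eq_iff, ← sum_sub_distrib]
  simp only [← sub_mul, ← C_sub, eval_finsetSum, eval_mul, eval_C,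
    descPochhammer_eval_eq_descFactorial]
  push_cast
  rw [forall_dvd_sum_mul_descFactorial_iff]
  simp only [pow_dvd_mul_factorial_iff hp]

theorem sum_range_betaP_eq_sum_range (hp : p.Prime) {n N : ℕ} (hN : betaP p n ≤ N)
    {a : ℕ → ℤ} (ha : ∀ k, 0 ≤ a k ∧ a k < (p : ℤ) ^ (n - alphaP p k)) :
    ∑ k ∈ range (betaP p n), C (a k) * descPochhammer ℤ k =
      ∑ k ∈ range N, C (a k) * descPochhammer ℤ k :=
  sum_subset (range_subset_range.2 hN) fun k _ hk => by
    rw [eq_zero_of_betaP_le hp (not_lt.1 (mem_range.not.1 hk)) (ha k).1 (ha k).2, C_0, zero_mul]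

theorem aeval_sum_range_betaP_eq_iff (hp : p.Prime) {n N : ℕ} (hN : betaP p n ≤ N)
    {a b : ℕ → ℤ} (ha : ∀ k, 0 ≤ a k ∧ a k < (p : ℤ) ^ (n - alphaP p k)) :
    ((fun x : ZMod (p ^ n) => aeval x (∑ k ∈ range (betaP p n), C (a k) * descPochhammer ℤ k)) =
      fun x => aeval x (∑ k ∈ range N, C (b k) * descPochhammer ℤ k)) ↔
    a = fun k => b k % (p : ℤ) ^ (n - alphaP p k) := by
  rw [sum_range_betaP_eq_sum_range hp hN ha, aeval_sum_descPochhammer_eq_iff hp, funext_iff]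
  refine forall_congr' fun k => ?_
  have hmod : (p : ℤ) ^ (n - alphaP p k) ∣ a k - b k ↔ a k = b k % (p : ℤ) ^ (n - alphaP p k) := by
    rw [← Int.modEq_iff_dvd, Int.ModEq, Int.emod_eq_of_lt (ha k).1 (ha k).2, eq_comm]
  refine ⟨fun h => hmod.1 ((lt_or_ge k N).elim h fun hNk => ?_), fun h _ => hmod.2 h⟩
  rw [sub_alphaP_eq_zero_of_betaP_le hp (hN.trans hNk), pow_zero]
  exact one_dvd _

end

-- For `k ≥ β_p(n)` the bound reads `a k < p ^ 0`, so `a` carries only `a_0, …, a_{β_p(n)-1}`.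
theorem unique_canonical_representation_general (p : ℕ) (hp : p.Prime) (n : ℕ)
    (g : ZMod (p ^ n) → ZMod (p ^ n))
    (hg : ∃ f : Polynomial ℤ, g = fun x => Polynomial.aeval x f) :
    ∃! a : ℕ → ℤ,
      (∀ k, 0 ≤ a k ∧ a k < (p : ℤ) ^ (n - alphaP p k)) ∧
      g = fun x => Polynomial.aeval x
        (∑ k ∈ Finset.range (betaP p n), Polynomial.C (a k) * descPochhammer ℤ k) := by
  obtain ⟨f, rfl⟩ := hg
  have hN : betaP p n ≤ max (f.natDegree + 1) (betaP p n) := le_max_right _ _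
  obtain ⟨b, hb⟩ := exists_eq_sum_C_mul_descPochhammer f (N := max (f.natDegree + 1) (betaP p n))
    (degree_le_natDegree.trans_lt (by exact_mod_cast lt_max_of_lt_left (lt_add_one _)))
  rw [hb]
  have hpow : ∀ k, (0 : ℤ) < (p : ℤ) ^ (n - alphaP p k) := fun k => by
    have := hp.pos; positivity
  have hred : ∀ k, 0 ≤ b k % (p : ℤ) ^ (n - alphaP p k) ∧
      b k % (p : ℤ) ^ (n - alphaP p k) < (p : ℤ) ^ (n - alphaP p k) := fun k =>
    ⟨Int.emod_nonneg _ (hpow k).ne', Int.emod_lt_of_pos _ (hpow k)⟩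
  refine ⟨_, ⟨hred, ((aeval_sum_range_betaP_eq_iff hp hN hred).2 rfl).symm⟩, ?_⟩
  rintro a ⟨ha, hrepr⟩
  exact (aeval_sum_range_betaP_eq_iff hp hN ha).1 hrepr.symm

/-- Every polynomial function on `ℤ/p^nℤ` is represented by a unique polynomial
of the form `Σ_{k=0}^{β_p(n)-1} a_k (x)_k` with `0 ≤ a_k < p^{n - α_p(k)}`
for all `k`.  (For `k ≥ β_p(n)` the bound forces `a_k = 0`, so the coefficient
sequence below carries exactly the coefficients `a_0, …, a_{β_p(n)-1}`.) -/
theorem unique_canonical_representation (p : ℕ) (hp : p.Prime) (n : ℕ) (hn : 1 ≤ n)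
    (g : ZMod (p ^ n) → ZMod (p ^ n))
    (hg : ∃ f : Polynomial ℤ, g = fun x => Polynomial.aeval x f) :
    ∃! a : ℕ → ℤ,
      (∀ k, 0 ≤ a k ∧ a k < (p : ℤ) ^ (n - alphaP p k)) ∧
      g = fun x => Polynomial.aeval x
        (∑ k ∈ Finset.range (betaP p n), Polynomial.C (a k) * descPochhammer ℤ k) :=
  unique_canonical_representation_general p hp n g hg
end

section
/- Let p be a prime and 1 ≤ n ≤ p. Let f, g ∈ ℤ[x] have canonical representations f = Σ_m f_m·(x^p−x)^m and g = Σ_m g_m·(x^p−x)^m with deg f_m < p and deg g_m < p for all m. Then [f]_{p^n} = [g]_{p^n} if and only if f_k ≡ g_k (mod p^{n−k}ℤ[x]) for all 0 ≤ k < n. -/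
/-!
Put `D_m = F_m - G_m` and `u(a) = (a ^ p - a) / p`, so that
`f(a) - g(a) = Σ p ^ m D_m(a) u(a) ^ m`; this gives the easy direction. Conversely, induct on `n`:
if `D_k = p ^ (n - k) H_k` for `k ≤ n` and `p ^ (n + 1)` divides every value, then
`p ∣ Σ_{m ≤ n} H_m(b) u(b) ^ m` for every integer `b`. Since `b ↦ (b, u(b))` maps onto `(ℤ/p)²`,
the polynomial `Σ_m H_m(x) y ^ m`, of degree `< p` in each variable, vanishes on `𝔽_p²` and hence
is zero mod `p`.
-/

open Polynomial Finset

/-- `(a ^ p - a) / p`; an exact quotient when `p` is prime, by Fermat's little theorem. -/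
def powSubSelfDiv (p : ℕ) (a : ℤ) : ℤ := (a ^ p - a) / p

section PowSubSelfDiv

variable {p : ℕ}

theorem dvd_pow_sub_self (hp : p.Prime) (a : ℤ) : (p : ℤ) ∣ a ^ p - a :=
  (Int.ModEq.pow_prime_eq_self hp a).symm.dvd

theorem mul_powSubSelfDiv (hp : p.Prime) (a : ℤ) : (p : ℤ) * powSubSelfDiv p a = a ^ p - a :=
  Int.mul_ediv_cancel' (dvd_pow_sub_self hp a)

theorem pow_sub_self_pow (hp : p.Prime) (a : ℤ) (m : ℕ) :
    (a ^ p - a) ^ m = (p : ℤ) ^ m * powSubSelfDiv p a ^ m := by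
  rw [← mul_pow, mul_powSubSelfDiv hp]

theorem intCast_powSubSelfDiv_add_mul (hp : p.Prime) (a t : ℤ) :
    (powSubSelfDiv p (a + p * t) : ZMod p) = powSubSelfDiv p a - t := by
  have hsq : (p : ℤ) * p ∣ (a + p * t) ^ p - a ^ p := by
    simpa [sq] using dvd_sub_pow_of_dvd_sub (p := p) (a := a + p * t) (b := a) (by simp) 1
  have hdiff : (p : ℤ) * (powSubSelfDiv p (a + p * t) - (powSubSelfDiv p a - t)) =
      (a + p * t) ^ p - a ^ p := by
    rw [mul_sub, mul_sub, mul_powSubSelfDiv hp, mul_powSubSelfDiv hp]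
    ring
  rw [← hdiff] at hsq
  rw [← Int.cast_sub, ZMod.intCast_eq_intCast_iff_dvd_sub, ← dvd_neg, neg_sub]
  exact (mul_dvd_mul_iff_left (by exact_mod_cast hp.ne_zero)).mp hsq

theorem exists_intCast_eq_and_intCast_powSubSelfDiv_eq (hp : p.Prime) (x y : ZMod p) :
    ∃ b : ℤ, (b : ZMod p) = x ∧ (powSubSelfDiv p b : ZMod p) = y := by
  obtain ⟨a, rfl⟩ := ZMod.intCast_surjective x
  obtain ⟨v, rfl⟩ := ZMod.intCast_surjective y
  refine ⟨a + p * (powSubSelfDiv p a - v), by simp, ?_⟩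
  rw [intCast_powSubSelfDiv_add_mul hp]
  push_cast
  ring

end PowSubSelfDiv

theorem Polynomial.eq_zero_of_forall_sum_eval_mul_pow_eq_zero {K : Type*} [CommRing K]
    [IsDomain K] [Fintype K] {N : ℕ} (hN : N ≤ Fintype.card K) {Q : Fin N → K[X]}
    (hQ : ∀ i, (Q i).degree < Fintype.card K)
    (h : ∀ x y : K, ∑ i, (Q i).eval x * y ^ (i : ℕ) = 0) : Q = 0 := by
  have hcoeff (x : K) : (fun i => (Q i).eval x) = 0 :=
    Matrix.eq_zero_of_forall_index_sum_mul_pow_eq_zero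
      ((Fintype.equivFin K).symm.injective.comp (Fin.castLE_injective hN)) fun _ => h x _
  funext i
  exact eq_zero_of_degree_lt_of_eval_finset_eq_zero univ (by simpa using hQ i)
    fun x _ => congrFun (hcoeff x) i

theorem dvd_coeff_of_forall_dvd_sum_eval_mul_powSubSelfDiv_pow {p : ℕ} (hp : p.Prime) {N : ℕ}
    (hN : N ≤ p) {H : ℕ → ℤ[X]} (hdeg : ∀ m < N, (H m).degree < p)
    (h : ∀ b : ℤ, (p : ℤ) ∣ ∑ m ∈ range N, (H m).eval b * powSubSelfDiv p b ^ m) :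
    ∀ m < N, ∀ i, (p : ℤ) ∣ (H m).coeff i := by
  have := Fact.mk hp
  have hbar : (fun i : Fin N => (H i).map (Int.castRingHom (ZMod p))) = 0 := by
    refine eq_zero_of_forall_sum_eval_mul_pow_eq_zero (by simpa using hN)
      (fun i => degree_map_le.trans_lt (by simpa using hdeg i i.2)) fun x y => ?_
    obtain ⟨b, rfl, rfl⟩ := exists_intCast_eq_and_intCast_powSubSelfDiv_eq hp x y
    have := (ZMod.intCast_zmod_eq_zero_iff_dvd _ p).2 (h b)
    simpa [Finset.sum_range, eval_intCast_map] using this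
  intro m hm i
  simpa [ZMod.intCast_zmod_eq_zero_iff_dvd] using congrArg (coeff · i) (congrFun hbar ⟨m, hm⟩)

theorem pow_dvd_sum_range_mul_pow_sub_sum_range {R : Type*} [CommRing R] {c : ℕ → R} {M : ℕ}
    (hc : ∀ m, M ≤ m → c m = 0) (w : R) (N : ℕ) :
    w ^ N ∣ ∑ m ∈ range M, c m * w ^ m - ∑ m ∈ range N, c m * w ^ m := by
  rcases le_total M N with h | h
  · rw [← sum_range_add_sum_Ico _ h, sub_add_cancel_left, dvd_neg,
      sum_eq_zero fun m hm => by rw [hc m (mem_Ico.1 hm).1, zero_mul]]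
    exact dvd_zero _
  · rw [← sum_range_add_sum_Ico _ h, add_sub_cancel_left]
    exact dvd_sum fun m hm => (pow_dvd_pow w (mem_Ico.1 hm).1).mul_left _

section SumEvalMulPowSubSelf

variable {p : ℕ}

theorem pow_dvd_sum_eval_mul_pow_sub_self_of_dvd_coeff (hp : p.Prime) {n M : ℕ} {D : ℕ → ℤ[X]}
    (hD : ∀ k < n, ∀ i, (p : ℤ) ^ (n - k) ∣ (D k).coeff i) (a : ℤ) :
    (p : ℤ) ^ n ∣ ∑ m ∈ range M, (D m).eval a * (a ^ p - a) ^ m := by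
  refine dvd_sum fun m _ => ?_
  have hpow : (p : ℤ) ^ m ∣ (a ^ p - a) ^ m := pow_dvd_pow_of_dvd (dvd_pow_sub_self hp a) m
  rcases lt_or_ge m n with hm | hm
  · have heval : (p : ℤ) ^ (n - m) ∣ (D m).eval a := by
      simpa using eval_dvd (x := a) ((C_dvd_iff_dvd_coeff _ _).2 (hD m hm))
    simpa [← pow_add, Nat.sub_add_cancel hm.le] using mul_dvd_mul heval hpow
  · exact ((pow_dvd_pow _ hm).trans hpow).mul_left _

theorem dvd_coeff_of_forall_pow_dvd_sum_eval_mul_pow_sub_self (hp : p.Prime) {n M : ℕ}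
    (hnp : n ≤ p) {D : ℕ → ℤ[X]} (hdeg : ∀ m, (D m).degree < p) (hD0 : ∀ m, M ≤ m → D m = 0)
    (h : ∀ a : ℤ, (p : ℤ) ^ n ∣ ∑ m ∈ range M, (D m).eval a * (a ^ p - a) ^ m) :
    ∀ k < n, ∀ i, (p : ℤ) ^ (n - k) ∣ (D k).coeff i := by
  induction n with
  | zero => simp
  | succ n ih =>
    have hp0 : (p : ℤ) ≠ 0 := by exact_mod_cast hp.ne_zero
    have hprev := ih (by omega) fun a => (pow_dvd_pow _ n.le_succ).trans (h a)
    have hfactor (k : ℕ) (hk : k ≤ n) : ∃ H, D k = C ((p : ℤ) ^ (n - k)) * H := by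
      refine (C_dvd_iff_dvd_coeff _ _).2 fun i => ?_
      rcases hk.lt_or_eq with hk | rfl
      · exact hprev k hk i
      · simp
    choose! H hH using hfactor
    have hHdeg : ∀ m < n + 1, (H m).degree < p := fun m hm => by
      rw [← degree_C_mul (pow_ne_zero (n - m) hp0), ← hH m (by omega)]
      exact hdeg m
    have hHsum (b : ℤ) : (p : ℤ) ∣ ∑ m ∈ range (n + 1), (H m).eval b * powSubSelfDiv p b ^ m := by
      have htrunc : (p : ℤ) ^ (n + 1) ∣ ∑ m ∈ range (n + 1), (D m).eval b * (b ^ p - b) ^ m :=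
        (dvd_sub_right (h b)).mp <| (pow_dvd_pow_of_dvd (dvd_pow_sub_self hp b) _).trans <|
          pow_dvd_sum_range_mul_pow_sub_sum_range (fun m hm => by rw [hD0 m hm, eval_zero]) _ _
      have hrescale : ∑ m ∈ range (n + 1), (D m).eval b * (b ^ p - b) ^ m =
          (p : ℤ) ^ n * ∑ m ∈ range (n + 1), (H m).eval b * powSubSelfDiv p b ^ m := by
        rw [mul_sum]
        refine sum_congr rfl fun m hm => ?_
        have hmn : m ≤ n := Nat.lt_succ_iff.mp (mem_range.mp hm)
        rw [hH m hmn, pow_sub_self_pow hp, eval_mul, eval_C, ← Nat.sub_add_cancel hmn, pow_add,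
          Nat.add_sub_cancel]
        ring
      rw [hrescale, pow_succ] at htrunc
      exact (mul_dvd_mul_iff_left (pow_ne_zero n hp0)).mp htrunc
    intro k hk i
    rw [hH k (by omega), coeff_C_mul, Nat.succ_sub (by omega), pow_succ]
    exact mul_dvd_mul_left _
      (dvd_coeff_of_forall_dvd_sum_eval_mul_powSubSelfDiv_pow hp hnp hHdeg hHsum k hk i)

end SumEvalMulPowSubSelf

theorem aeval_zmod_eq_aeval_iff_forall_dvd_eval_sub (N : ℕ) (f g : ℤ[X]) :
    ((fun x : ZMod N => aeval x f) = fun x => aeval x g) ↔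
      ∀ a : ℤ, (N : ℤ) ∣ f.eval a - g.eval a := by
  rw [funext_iff, ZMod.intCast_surjective.forall]
  refine forall_congr' fun a => ?_
  rw [aeval_def, aeval_def, eval₂_at_intCast, eval₂_at_intCast, eq_comm]
  exact ZMod.intCast_eq_intCast_iff_dvd_sub _ _ _

theorem eq_mod_pn_iff_canonical_congruences_general (p : ℕ) (hp : p.Prime)
    (n : ℕ) (hnp : n ≤ p)
    (M : ℕ) (F G : ℕ → Polynomial ℤ)
    (hFdeg : ∀ m, (F m).degree < (p : WithBot ℕ))
    (hGdeg : ∀ m, (G m).degree < (p : WithBot ℕ))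
    (hF0 : ∀ m, M ≤ m → F m = 0) (hG0 : ∀ m, M ≤ m → G m = 0)
    (f g : Polynomial ℤ)
    (hf : f = ∑ m ∈ Finset.range M, F m * (Polynomial.X ^ p - Polynomial.X) ^ m)
    (hg : g = ∑ m ∈ Finset.range M, G m * (Polynomial.X ^ p - Polynomial.X) ^ m) :
    ((fun x : ZMod (p ^ n) => Polynomial.aeval x f) =
        fun x : ZMod (p ^ n) => Polynomial.aeval x g) ↔
      ∀ k < n, ∀ i : ℕ, (p : ℤ) ^ (n - k) ∣ (F k - G k).coeff i := by
  have hsub (a : ℤ) :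
      f.eval a - g.eval a = ∑ m ∈ range M, (F m - G m).eval a * (a ^ p - a) ^ m := by
    simp only [hf, hg, eval_finsetSum, eval_mul, eval_pow, eval_sub, eval_X, ← sum_sub_distrib,
      sub_mul]
  rw [aeval_zmod_eq_aeval_iff_forall_dvd_eval_sub, Nat.cast_pow]
  simp_rw [hsub]
  exact ⟨dvd_coeff_of_forall_pow_dvd_sum_eval_mul_pow_sub_self hp hnp
      (fun m => (degree_sub_le _ _).trans_lt (max_lt (hFdeg m) (hGdeg m)))
      (fun m hm => by rw [hF0 m hm, hG0 m hm, sub_zero]),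
    pow_dvd_sum_eval_mul_pow_sub_self_of_dvd_coeff hp⟩

/-- Let `1 ≤ n ≤ p` and let `f = Σ_m F_m (x^p - x)^m`, `g = Σ_m G_m (x^p - x)^m`
be canonical representations (all `F_m, G_m` of degree `< p`).  Then `f` and `g`
induce the same function on `ℤ/p^nℤ` if and only if `F_k ≡ G_k (mod p^{n-k}ℤ[x])`
for all `0 ≤ k < n` (i.e. every coefficient of `F_k - G_k` is divisible by
`p^{n-k}`). -/
theorem eq_mod_pn_iff_canonical_congruences (p : ℕ) (hp : p.Prime)
    (n : ℕ) (hn1 : 1 ≤ n) (hnp : n ≤ p)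
    (M : ℕ) (F G : ℕ → Polynomial ℤ)
    (hFdeg : ∀ m, (F m).degree < (p : WithBot ℕ))
    (hGdeg : ∀ m, (G m).degree < (p : WithBot ℕ))
    (hF0 : ∀ m, M ≤ m → F m = 0) (hG0 : ∀ m, M ≤ m → G m = 0)
    (f g : Polynomial ℤ)
    (hf : f = ∑ m ∈ Finset.range M, F m * (Polynomial.X ^ p - Polynomial.X) ^ m)
    (hg : g = ∑ m ∈ Finset.range M, G m * (Polynomial.X ^ p - Polynomial.X) ^ m) :
    ((fun x : ZMod (p ^ n) => Polynomial.aeval x f) =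
        fun x : ZMod (p ^ n) => Polynomial.aeval x g) ↔
      ∀ k < n, ∀ i : ℕ, (p : ℤ) ^ (n - k) ∣ (F k - G k).coeff i :=
  eq_mod_pn_iff_canonical_congruences_general p hp n hnp M F G hFdeg hGdeg hF0 hG0 f g hf hg
end

section
/- Let p be a prime and let f, g ∈ ℤ[x] have canonical representations f = Σ_m f_m·(x^p−x)^m and g = Σ_m g_m·(x^p−x)^m with deg f_m < p and deg g_m < p for all m. Then [f]_p = [g]_p and [f′]_p = [g′]_p (where f′, g′ denote the formal derivatives) if and only if f_0 ≡ g_0 (mod pℤ[x]) and f_1 ≡ g_1 (mod pℤ[x]). -/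
/-!
Modulo `(x^p - x)^2` a canonical sum is `F₀ + F₁ (x^p - x)`. As `x^p - x` vanishes on `ℤ/p` with
derivative `-1` there, `[f]_p = [F₀]_p` and `[f']_p = [F₀' - F₁]_p`. Reduced mod `p`, the `F_m` have
degree `< p = |ℤ/p|`, so they are determined by the functions they induce on `ℤ/p`: `[F₀]_p = [G₀]_p`
forces `F₀ ≡ G₀`, hence `F₀' ≡ G₀'`, and then `[F₁]_p = [G₁]_p` forces `F₁ ≡ G₁`.
-/

open Polynomial

section Semiring

variable {R : Type*} [CommSemiring R]

theorem exists_sum_range_mul_pow_eq (q : R[X]) (H : ℕ → R[X]) {M : ℕ}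
    (hH : ∀ m, M ≤ m → H m = 0) :
    ∃ r, ∑ m ∈ Finset.range M, H m * q ^ m = H 0 + H 1 * q + q ^ 2 * r := by
  refine ⟨∑ m ∈ Finset.range M, H (m + 2) * q ^ m, ?_⟩
  have hextend : ∑ m ∈ Finset.range M, H m * q ^ m = ∑ m ∈ Finset.range (M + 2), H m * q ^ m :=
    Finset.sum_subset (Finset.range_subset_range.mpr (by omega)) fun m _ hm => by
      rw [hH m (by simpa using hm), zero_mul]
  have hshift : ∀ m ∈ Finset.range M,
      H (m + 1 + 1) * q ^ (m + 1 + 1) = q ^ 2 * (H (m + 2) * q ^ m) := fun m _ => by ring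
  rw [hextend, Finset.sum_range_succ', Finset.sum_range_succ', Finset.sum_congr rfl hshift,
    ← Finset.mul_sum]
  ring

variable {A : Type*} [CommSemiring A] [Algebra R A]

theorem aeval_add_mul_add_sq_mul {a b q r : R[X]} {x : A} (hq : aeval x q = 0) :
    aeval x (a + b * q + q ^ 2 * r) = aeval x a := by
  simp [hq]

theorem aeval_derivative_add_mul_add_sq_mul {a b q r : R[X]} {x : A} (hq : aeval x q = 0) :
    aeval x (derivative (a + b * q + q ^ 2 * r)) =
      aeval x (derivative a) + aeval x b * aeval x (derivative q) := by
  simp [derivative_mul, derivative_pow, hq]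

theorem natDegree_map_lt_of_degree_lt {S : Type*} [Semiring S] (f : R →+* S) {a : R[X]} {n : ℕ}
    (hn : n ≠ 0) (h : a.degree < n) : (a.map f).natDegree < n := by
  by_cases h0 : a.map f = 0
  · simpa [h0] using Nat.pos_of_ne_zero hn
  · exact (natDegree_lt_iff_degree_lt h0).mpr (degree_map_le.trans_lt h)

end Semiring

theorem eval_eq_and_eval_derivative_sub_eq_iff {K : Type*} [CommRing K] [IsDomain K] [Fintype K]
    {a₀ a₁ b₀ b₁ : K[X]} (h₀ : max a₀.natDegree b₀.natDegree < Fintype.card K)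
    (h₁ : max a₁.natDegree b₁.natDegree < Fintype.card K) :
    ((∀ x, eval x a₀ = eval x b₀) ∧
        ∀ x, eval x (derivative a₀) - eval x a₁ = eval x (derivative b₀) - eval x b₁) ↔
      a₀ = b₀ ∧ a₁ = b₁ := by
  constructor
  · rintro ⟨heval₀, heval₁⟩
    have hab₀ : a₀ = b₀ := eq_of_natDegree_lt_card_of_eval_eq _ _ Function.injective_id heval₀ h₀
    refine ⟨hab₀, eq_of_natDegree_lt_card_of_eval_eq _ _ Function.injective_id (fun x => ?_) h₁⟩
    simpa [hab₀] using heval₁ x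
  · rintro ⟨rfl, rfl⟩
    exact ⟨fun _ => rfl, fun _ => rfl⟩

theorem forall_dvd_coeff_sub_iff_map_eq (p : ℕ) (a b : ℤ[X]) :
    (∀ i, (p : ℤ) ∣ (a - b).coeff i) ↔
      a.map (algebraMap ℤ (ZMod p)) = b.map (algebraMap ℤ (ZMod p)) := by
  rw [← sub_eq_zero, ← Polynomial.map_sub]
  simp only [Polynomial.ext_iff, coeff_map, coeff_zero, algebraMap_int_eq, eq_intCast,
    ZMod.intCast_zmod_eq_zero_iff_dvd]

section ZMod

variable {p : ℕ}

theorem aeval_X_pow_sub_X_zmod [Fact p.Prime] (x : ZMod p) :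
    aeval x ((X : ℤ[X]) ^ p - X) = 0 := by
  simp [ZMod.pow_card]

theorem aeval_derivative_X_pow_sub_X_zmod (x : ZMod p) :
    aeval x (derivative ((X : ℤ[X]) ^ p - X)) = -1 := by
  simp [derivative_X_pow]

end ZMod

/-- Let `f = Σ_m F_m (x^p - x)^m`, `g = Σ_m G_m (x^p - x)^m` be canonical
representations (all `F_m, G_m` of degree `< p`).  Then `[f]_p = [g]_p` and
`[f']_p = [g']_p` if and only if `F_0 ≡ G_0 (mod pℤ[x])` and
`F_1 ≡ G_1 (mod pℤ[x])`. -/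
theorem eq_mod_p_and_deriv_iff_canonical_congruences (p : ℕ) (hp : p.Prime)
    (M : ℕ) (F G : ℕ → Polynomial ℤ)
    (hFdeg : ∀ m, (F m).degree < (p : WithBot ℕ))
    (hGdeg : ∀ m, (G m).degree < (p : WithBot ℕ))
    (hF0 : ∀ m, M ≤ m → F m = 0) (hG0 : ∀ m, M ≤ m → G m = 0)
    (f g : Polynomial ℤ)
    (hf : f = ∑ m ∈ Finset.range M, F m * (Polynomial.X ^ p - Polynomial.X) ^ m)
    (hg : g = ∑ m ∈ Finset.range M, G m * (Polynomial.X ^ p - Polynomial.X) ^ m) :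
    (((fun x : ZMod p => Polynomial.aeval x f) =
        fun x : ZMod p => Polynomial.aeval x g) ∧
     ((fun x : ZMod p => Polynomial.aeval x (Polynomial.derivative f)) =
        fun x : ZMod p => Polynomial.aeval x (Polynomial.derivative g))) ↔
      ((∀ i : ℕ, (p : ℤ) ∣ (F 0 - G 0).coeff i) ∧
       (∀ i : ℕ, (p : ℤ) ∣ (F 1 - G 1).coeff i)) := by
  have := Fact.mk hp
  obtain ⟨rF, hrF⟩ := exists_sum_range_mul_pow_eq (X ^ p - X) F hF0
  obtain ⟨rG, hrG⟩ := exists_sum_range_mul_pow_eq (X ^ p - X) G hG0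
  subst hf hg
  have hdeg : ∀ H : ℕ → ℤ[X], (∀ m, (H m).degree < p) →
      ∀ m, ((H m).map (algebraMap ℤ (ZMod p))).natDegree < Fintype.card (ZMod p) := fun H hH m => by
    rw [ZMod.card]
    exact natDegree_map_lt_of_degree_lt _ hp.ne_zero (hH m)
  rw [hrF, hrG, forall_dvd_coeff_sub_iff_map_eq, forall_dvd_coeff_sub_iff_map_eq,
    ← eval_eq_and_eval_derivative_sub_eq_iff (max_lt (hdeg F hFdeg 0) (hdeg G hGdeg 0))
      (max_lt (hdeg F hFdeg 1) (hdeg G hGdeg 1))]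
  simp only [funext_iff]
  refine and_congr (forall_congr' fun x => ?_) (forall_congr' fun x => ?_)
  · rw [aeval_add_mul_add_sq_mul (aeval_X_pow_sub_X_zmod x),
      aeval_add_mul_add_sq_mul (aeval_X_pow_sub_X_zmod x), eval_map_algebraMap, eval_map_algebraMap]
  · rw [aeval_derivative_add_mul_add_sq_mul (aeval_X_pow_sub_X_zmod x),
      aeval_derivative_add_mul_add_sq_mul (aeval_X_pow_sub_X_zmod x),
      aeval_derivative_X_pow_sub_X_zmod]
    simp only [derivative_map, eval_map_algebraMap, mul_neg_one, sub_eq_add_neg]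
end

section
/- Let p be a prime, n ≥ 2, and f ∈ ℤ[x]. The function [f]_{p^n} induced by f on ℤ/p^nℤ is a permutation of ℤ/p^nℤ if and only if [f]_p is a permutation of ℤ/pℤ and the formal derivative f′ has no root mod p, i.e. [f′]_p(x) ≠ 0 for all x ∈ ℤ/pℤ. -/
open Polynomial Function

/-!
Everything rests on Taylor's formula `f (x + h) ≡ f x + f' x * h [mod h ^ 2]`.
If `p ∣ f' z`, then `z` and `z + p ^ (n - 1)` have the same image mod `p ^ n`, so `f` is not
injective there; surjectivity mod `p` descends from surjectivity mod `p ^ n`.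
Conversely, if `f'` has no root mod `p`, then `p ^ (k + 1) ∣ f a - f b` and `a = b + p ^ k t`
with `k ≥ 1` give `p ∣ f' b * t`, hence `p ∣ t`: injectivity lifts from `p` to every `p ^ k`,
and on the finite ring `ℤ/p^nℤ` injectivity is bijectivity.
-/

theorem Polynomial.sq_dvd_eval_add_sub_eval_sub {R : Type*} [CommRing R] (f : R[X]) (x h : R) :
    h ^ 2 ∣ f.eval (x + h) - f.eval x - f.derivative.eval x * h := by
  obtain ⟨k, hk⟩ := f.binomExpansion x h
  exact ⟨k, by rw [hk]; ring⟩

theorem Polynomial.pow_dvd_eval_add_pow_pred_sub_eval {R : Type*} [CommRing R] {p : R} {n : ℕ}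
    (hn : 2 ≤ n) (f : R[X]) {z : R} (hz : p ∣ f.derivative.eval z) :
    p ^ n ∣ f.eval (z + p ^ (n - 1)) - f.eval z := by
  have hsq : p ^ n ∣ (p ^ (n - 1)) ^ 2 := by
    rw [← pow_mul]
    exact pow_dvd_pow p (by omega)
  have hlin : p ^ n ∣ f.derivative.eval z * p ^ (n - 1) := by
    rw [← pow_sub_one_mul (by omega : n ≠ 0), mul_comm]
    exact mul_dvd_mul_right hz _
  rw [← sub_add_cancel (f.eval _ - _) (f.derivative.eval z * p ^ (n - 1))]
  exact dvd_add (hsq.trans (f.sq_dvd_eval_add_sub_eval_sub z _)) hlin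

section HenselLifting

variable {R : Type*} [CommRing R] [IsDomain R] {p : R} {f : R[X]}

theorem Polynomial.pow_succ_dvd_sub_of_pow_succ_dvd_eval_sub (hp : Prime p)
    (hf' : ∀ b, ¬ p ∣ f.derivative.eval b) {k : ℕ} (hk : 1 ≤ k) {a b : R}
    (hab : p ^ k ∣ a - b) (hf : p ^ (k + 1) ∣ f.eval a - f.eval b) : p ^ (k + 1) ∣ a - b := by
  obtain ⟨t, ht⟩ := hab
  obtain rfl : a = b + p ^ k * t := by rw [← ht, add_sub_cancel]
  have hsq : p ^ (k + 1) ∣ (p ^ k * t) ^ 2 :=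
    (pow_dvd_pow p (by omega : k + 1 ≤ k * 2)).trans
      (by rw [pow_mul, mul_pow]; exact dvd_mul_right _ _)
  have hlin : p ^ k * p ∣ p ^ k * (f.derivative.eval b * t) := by
    rw [← pow_succ, mul_left_comm, ← sub_sub_cancel (f.eval _ - _) (f.derivative.eval b * _)]
    exact dvd_sub hf (hsq.trans (f.sq_dvd_eval_add_sub_eval_sub b _))
  have ht : p ∣ t :=
    ((hp.dvd_or_dvd ((mul_dvd_mul_iff_left (pow_ne_zero k hp.ne_zero)).mp hlin)).resolve_left
      (hf' b))
  rw [add_sub_cancel_left, pow_succ]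
  exact mul_dvd_mul_left _ ht

theorem Polynomial.pow_dvd_sub_of_pow_dvd_eval_sub (hp : Prime p)
    (hf' : ∀ b, ¬ p ∣ f.derivative.eval b) (hinj : ∀ a b, p ∣ f.eval a - f.eval b → p ∣ a - b)
    (k : ℕ) {a b : R} (hf : p ^ k ∣ f.eval a - f.eval b) : p ^ k ∣ a - b := by
  induction k with
  | zero => simp
  | succ k ih =>
    rcases Nat.eq_zero_or_pos k with rfl | hk
    · simpa using hinj a b (by simpa using hf)
    · exact pow_succ_dvd_sub_of_pow_succ_dvd_eval_sub hp hf' hk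
        (ih ((pow_dvd_pow p k.le_succ).trans hf)) hf

end HenselLifting

namespace ZMod

theorem aeval_intCast (m : ℕ) (f : ℤ[X]) (z : ℤ) :
    aeval (z : ZMod m) f = ((f.eval z : ℤ) : ZMod m) := by
  rw [← eq_intCast (algebraMap ℤ (ZMod m)), aeval_algebraMap_apply_eq_algebraMap_eval,
    eq_intCast]

theorem injective_aeval_iff (m : ℕ) (f : ℤ[X]) :
    Injective (fun x : ZMod m => aeval x f) ↔
      ∀ a b : ℤ, (m : ℤ) ∣ f.eval a - f.eval b → (m : ℤ) ∣ a - b := by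
  simp only [Injective, intCast_surjective.forall, aeval_intCast,
    intCast_eq_intCast_iff_dvd_sub, dvd_sub_comm]

theorem forall_aeval_ne_zero_iff (m : ℕ) (f : ℤ[X]) :
    (∀ x : ZMod m, aeval x f ≠ 0) ↔ ∀ b : ℤ, ¬ (m : ℤ) ∣ f.eval b := by
  simp only [intCast_surjective.forall, aeval_intCast, ne_eq, intCast_zmod_eq_zero_iff_dvd]

theorem surjective_aeval_of_dvd {m n : ℕ} (h : m ∣ n) (f : ℤ[X])
    (hf : Surjective (fun x : ZMod n => aeval x f)) : Surjective (fun x : ZMod m => aeval x f) := by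
  intro y
  obtain ⟨y, rfl⟩ := castHom_surjective h y
  obtain ⟨x, rfl⟩ := hf y
  exact ⟨castHom h _ x, aeval_algHom_apply (castHom h (ZMod m)).toIntAlgHom x f⟩

end ZMod

/-- For `n ≥ 2`, a polynomial `f ∈ ℤ[x]` induces a permutation of `ℤ/p^nℤ`
if and only if it induces a permutation of `ℤ/pℤ` and its formal derivative
has no root mod `p`. -/
theorem bijective_mod_pn_iff (p : ℕ) (hp : p.Prime) (n : ℕ) (hn : 2 ≤ n)
    (f : Polynomial ℤ) :
    Function.Bijective (fun x : ZMod (p ^ n) => Polynomial.aeval x f) ↔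
      (Function.Bijective (fun x : ZMod p => Polynomial.aeval x f) ∧
       ∀ x : ZMod p, Polynomial.aeval x (Polynomial.derivative f) ≠ 0) := by
  have : NeZero p := ⟨hp.ne_zero⟩
  have hpZ : Prime (p : ℤ) := Nat.prime_iff_prime_int.mp hp
  rw [ZMod.forall_aeval_ne_zero_iff, ← Finite.injective_iff_bijective (α := ZMod p)]
  constructor
  · intro hbij
    have hsurj := ZMod.surjective_aeval_of_dvd (dvd_pow_self p (by omega)) f hbij.2
    refine ⟨Finite.injective_iff_surjective.mpr hsurj, fun z hz => ?_⟩
    have hle := (ZMod.injective_aeval_iff _ f).mp hbij.1 _ _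
      (by exact_mod_cast f.pow_dvd_eval_add_pow_pred_sub_eval hn hz)
    push_cast at hle
    rw [add_sub_cancel_left, pow_dvd_pow_iff hpZ.ne_zero hpZ.not_isUnit] at hle
    omega
  · rintro ⟨hinj, hf'⟩
    rw [← Finite.injective_iff_bijective, ZMod.injective_aeval_iff, Nat.cast_pow]
    rw [ZMod.injective_aeval_iff] at hinj
    exact fun a b => f.pow_dvd_sub_of_pow_dvd_eval_sub hpZ hf' hinj n
end

section
/- Let p be a prime, n ≥ 2, and f ∈ ℤ[x]. Then [f]_{p^n} is a permutation of ℤ/p^nℤ if and only if [f]_{p^2} is a permutation of ℤ/p²ℤ. -/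
open Polynomial

private lemma aeval_intCast_zmod (m : ℕ) (f : ℤ[X]) (x : ℤ) :
    aeval (x : ZMod m) f = ((f.eval x : ℤ) : ZMod m) := by
  have := Polynomial.aeval_algebraMap_apply (ZMod m) x f
  simpa using this

/-- surjectivity in divisibility form -/
private lemma surj_iff (m : ℕ) (f : ℤ[X]) :
    Function.Surjective (fun x : ZMod m => aeval x f) ↔
      ∀ y : ℤ, ∃ x : ℤ, (m : ℤ) ∣ f.eval x - y := by
  constructor
  · intro h y
    obtain ⟨x, hx⟩ := h (y : ZMod m)
    obtain ⟨x', rfl⟩ := ZMod.intCast_surjective x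
    refine ⟨x', ?_⟩
    simp only [aeval_intCast_zmod] at hx
    rw [← ZMod.intCast_zmod_eq_zero_iff_dvd]
    push_cast
    rw [hx]; ring
  · intro h y
    obtain ⟨y', rfl⟩ := ZMod.intCast_surjective y
    obtain ⟨x, hx⟩ := h y'
    refine ⟨(x : ZMod m), ?_⟩
    simp only [aeval_intCast_zmod]
    rw [← ZMod.intCast_zmod_eq_zero_iff_dvd] at hx
    push_cast at hx
    linear_combination hx

private lemma surj_down {m k : ℕ} (p : ℕ) (f : ℤ[X]) (hk : k ≤ m)
    (h : Function.Surjective (fun x : ZMod (p ^ m) => aeval x f)) :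
    Function.Surjective (fun x : ZMod (p ^ k) => aeval x f) := by
  rw [surj_iff] at h ⊢
  intro y
  obtain ⟨x, hx⟩ := h y
  exact ⟨x, dvd_trans (by exact_mod_cast pow_dvd_pow p hk) hx⟩

private lemma deriv_unit (p : ℕ) (hp : p.Prime) (f : ℤ[X])
    (h : Function.Injective (fun x : ZMod (p ^ 2) => aeval x f)) :
    ∀ a : ℤ, ¬ (p : ℤ) ∣ f.derivative.eval a := by
  intro a hda
  obtain ⟨c, hc⟩ := hda
  obtain ⟨k, hk⟩ := f.binomExpansion a (p : ℤ)
  have key : ((a : ZMod (p ^ 2)) : ZMod (p ^ 2)) = ((a + p : ℤ) : ZMod (p ^ 2)) := by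
    apply h
    simp only [aeval_intCast_zmod]
    rw [ZMod.intCast_eq_intCast_iff]
    have hd2 : ((p : ℤ) ^ 2) ∣ (f.eval (a + p) - f.eval a) :=
      ⟨c + k, by rw [hk, hc]; ring⟩
    exact Int.modEq_iff_dvd.2 (by exact_mod_cast hd2)
  rw [ZMod.intCast_eq_intCast_iff] at key
  have h2 : ((p : ℤ) ^ 2) ∣ (a + p - a) := by
    have := Int.ModEq.dvd key
    simpa using (by exact_mod_cast this : ((p:ℤ)^2) ∣ (a + p - a))
  simp only [add_sub_cancel_left] at h2
  have hple := Int.le_of_dvd (by exact_mod_cast hp.pos) h2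
  have h2le : (2 : ℤ) ≤ p := by exact_mod_cast hp.two_le
  nlinarith

private lemma surj_lift (p : ℕ) (hp : p.Prime) (f : ℤ[X]) (m : ℕ)
    (hd : ∀ a : ℤ, ¬ (p : ℤ) ∣ f.derivative.eval a) (hm : 1 ≤ m)
    (h : Function.Surjective (fun x : ZMod (p ^ m) => aeval x f)) :
    Function.Surjective (fun x : ZMod (p ^ (m + 1)) => aeval x f) := by
  rw [surj_iff] at h ⊢
  intro y
  obtain ⟨x, c, hc⟩ := h y
  push_cast at hc
  haveI : Fact p.Prime := ⟨hp⟩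
  have hfx : ((f.derivative.eval x : ℤ) : ZMod p) ≠ 0 := by
    rw [Ne, ZMod.intCast_zmod_eq_zero_iff_dvd]
    exact_mod_cast hd x
  obtain ⟨t, ht⟩ := ZMod.intCast_surjective
    ((-(c : ZMod p)) / ((f.derivative.eval x : ℤ) : ZMod p))
  have htd : (p : ℤ) ∣ c + t * f.derivative.eval x := by
    rw [← ZMod.intCast_zmod_eq_zero_iff_dvd]
    push_cast
    rw [ht, div_mul_cancel₀ _ hfx]
    ring
  obtain ⟨u, hu⟩ := htd
  obtain ⟨k, hk⟩ := f.binomExpansion x (t * (p : ℤ) ^ m)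
  refine ⟨x + t * (p : ℤ) ^ m, ?_⟩
  rw [hk]
  have h2m : (p : ℤ) ^ (m + 1) ∣ (p : ℤ) ^ (2 * m) := pow_dvd_pow _ (by omega)
  obtain ⟨w, hw⟩ := h2m
  refine ⟨u + k * t ^ 2 * w, ?_⟩
  push_cast
  have hpow : ((p : ℤ) ^ m) ^ 2 = (p : ℤ) ^ (2 * m) := by rw [← pow_mul]; ring_nf
  linear_combination hc + (p : ℤ) ^ m * hu + k * t ^ 2 * hw + k * t ^ 2 * hpow

/-- For `n ≥ 2`, a polynomial `f ∈ ℤ[x]` induces a permutation of `ℤ/p^nℤ`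
if and only if it induces a permutation of `ℤ/p²ℤ`. -/
theorem bijective_mod_pn_iff_bijective_mod_psq (p : ℕ) (hp : p.Prime)
    (n : ℕ) (hn : 2 ≤ n) (f : Polynomial ℤ) :
    Function.Bijective (fun x : ZMod (p ^ n) => Polynomial.aeval x f) ↔
      Function.Bijective (fun x : ZMod (p ^ 2) => Polynomial.aeval x f) := by
  haveI : NeZero (p ^ n) := ⟨pow_ne_zero _ hp.ne_zero⟩
  haveI : NeZero (p ^ 2) := ⟨pow_ne_zero _ hp.ne_zero⟩
  rw [← Finite.surjective_iff_bijective, ← Finite.surjective_iff_bijective]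
  constructor
  · exact fun h => surj_down p f hn h
  · intro h
    have hd := deriv_unit p hp f (Finite.surjective_iff_bijective.mp h).injective
    have key : ∀ m, 2 ≤ m → Function.Surjective (fun x : ZMod (p ^ m) => aeval x f) := by
      intro m hm
      induction m, hm using Nat.le_induction with
      | base => exact h
      | succ m hm ih => exact surj_lift p hp f m hd (by omega) ih
    exact key n hn
end

section
/- Let p be a prime. For every pair of functions (α, β) with α : ℤ/pℤ → ℤ/pℤ bijective and β : ℤ/pℤ → ℤ/pℤ∖{0}, there are exactly p^p permutations of ℤ/p²ℤ of the form [f]_{p^2} for some f ∈ ℤ[x] with [f]_p = α and [f′]_p = β. -/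
/-!
Since `(p t)² = 0` in `ℤ/p²ℤ`, Taylor's formula reads `f (y + p t) = f y + f' y · p t`, and the
correction `f' y · p t` only depends on `f' mod p`. So a polynomial function `[f]_{p²}` with
`[f']_p = β` is determined by its values at one lift of each residue class, and these values
range freely over the `p` lifts of each `α x`: any `β` is reached by adding `(X^p - X) u`, which
vanishes mod `p` and has derivative `-1` mod `p`, and then any lifts by adding `p e`. This gives
`p^p` functions. If `α` is bijective and `β` never vanishes, each of them is a permutation:
`f (y + p t) = f y` forces `p t = 0` because `f' y` is a unit.
-/

open Polynomial Function

namespace ZMod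

theorem castHom_eq_castHom_iff {m n : ℕ} (h : m ∣ n) {z w : ZMod n} :
    castHom h (ZMod m) z = castHom h (ZMod m) w ↔ ∃ t, w = z + m * t := by
  refine ⟨fun hzw => ?_, ?_⟩
  · obtain ⟨a, rfl⟩ := intCast_surjective z
    obtain ⟨b, rfl⟩ := intCast_surjective w
    rw [map_intCast, map_intCast, eq_comm, ← sub_eq_zero, ← Int.cast_sub,
      intCast_zmod_eq_zero_iff_dvd] at hzw
    obtain ⟨k, hk⟩ := hzw
    exact ⟨k, by rw [← sub_add_cancel b a, hk]; push_cast; ring⟩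
  · rintro ⟨t, rfl⟩
    rw [map_add, map_mul, map_natCast, natCast_self, zero_mul, add_zero]

theorem card_fiber_castHom {m n : ℕ} [NeZero n] (h : m ∣ n) (a : ZMod m) :
    Nat.card {z : ZMod n // castHom h (ZMod m) z = a} = n / m := by
  have : NeZero m := ⟨by rintro rfl; exact NeZero.ne n (zero_dvd_iff.1 h)⟩
  have hfiber (b : ZMod m) : Nat.card {z : ZMod n // castHom h (ZMod m) z = b} =
      Nat.card {z : ZMod n // castHom h (ZMod m) z = a} := by
    simp only [Nat.card_eq_fintype_card, Fintype.card_subtype]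
    exact AddMonoidHom.card_fiber_eq_of_mem_range (castHom h (ZMod m))
      (castHom_surjective h b) (castHom_surjective h a)
  have hsum := Nat.card_congr (Equiv.sigmaFiberEquiv (castHom h (ZMod m)))
  rw [Nat.card_sigma, Finset.sum_congr rfl fun b _ => hfiber b, Finset.sum_const,
    Finset.card_univ, ZMod.card, Nat.card_zmod, smul_eq_mul] at hsum
  exact Nat.eq_div_of_mul_eq_right (NeZero.ne m) hsum

theorem isUnit_iff_castHom_ne_zero {p d : ℕ} [Fact p.Prime] (hd : 0 < d) {z : ZMod (p ^ d)} :
    IsUnit z ↔ castHom (dvd_pow_self p hd.ne') (ZMod p) z ≠ 0 := by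
  rw [← natCast_zmod_val z, map_natCast, isUnit_natCast_iff_not_dvd_pow Fact.out hd,
    Ne, natCast_eq_zero_iff]

end ZMod

namespace Polynomial

theorem map_aeval_int {R S : Type*} [CommRing R] [CommRing S] (φ : R →+* S) (f : ℤ[X]) (y : R) :
    φ (aeval y f) = aeval (φ y) f :=
  (aeval_algHom_apply φ.toIntAlgHom y f).symm

theorem exists_int_aeval_eq {p : ℕ} [Fact p.Prime] (φ : ZMod p → ZMod p) :
    ∃ q : ℤ[X], ∀ x, aeval x q = φ x := by
  obtain ⟨q, hq⟩ := map_surjective (Int.castRingHom (ZMod p)) ZMod.intCast_surjective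
    (Lagrange.interpolate Finset.univ id φ)
  refine ⟨q, fun x => ?_⟩
  rw [aeval_def, algebraMap_int_eq, ← eval_map, hq]
  exact Lagrange.eval_interpolate_at_node _ (Set.injOn_id _) (Finset.mem_univ x)

theorem exists_int_aeval_and_derivative_eq {p : ℕ} [Fact p.Prime] (α β : ZMod p → ZMod p) :
    ∃ f : ℤ[X], (∀ x, aeval x f = α x) ∧ ∀ x, aeval x (derivative f) = β x := by
  obtain ⟨a, ha⟩ := exists_int_aeval_eq α
  obtain ⟨u, hu⟩ := exists_int_aeval_eq fun x => aeval x (derivative a) - β x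
  refine ⟨a + (X ^ p - X) * u, fun x => ?_, fun x => ?_⟩
  · simp [ZMod.pow_card, ha]
  · simp [derivative_mul, derivative_X_pow, ZMod.pow_card, hu]

end Polynomial

namespace ZMod

section PrimeSquare

variable {p : ℕ}

local notation "π" => castHom (dvd_pow_self p two_ne_zero) (ZMod p)

theorem aeval_add_natCast_mul (f : ℤ[X]) (y t : ZMod (p ^ 2)) :
    aeval (y + (p : ZMod (p ^ 2)) * t) f =
      aeval y f + aeval y (derivative f) * ((p : ZMod (p ^ 2)) * t) :=
  aeval_add_of_sq_eq_zero f y _ <| by rw [mul_pow, ← Nat.cast_pow, natCast_self, zero_mul]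

theorem natCast_mul_eq_natCast_mul_of_castHom_eq {z w : ZMod (p ^ 2)} (h : π z = π w) :
    (p : ZMod (p ^ 2)) * z = (p : ZMod (p ^ 2)) * w := by
  obtain ⟨t, rfl⟩ := (castHom_eq_castHom_iff _).1 h
  rw [mul_add, ← mul_assoc, ← sq, ← Nat.cast_pow, natCast_self, zero_mul, add_zero]

theorem aeval_eq_aeval_of_eq_on_section {f g : ℤ[X]} (L : ZMod p → ZMod (p ^ 2))
    (hL : ∀ x, π (L x) = x)
    (hder : ∀ x : ZMod p, aeval x (derivative f) = aeval x (derivative g))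
    (hfg : ∀ x, aeval (L x) f = aeval (L x) g) (y : ZMod (p ^ 2)) :
    aeval y f = aeval y g := by
  obtain ⟨t, hy⟩ := (castHom_eq_castHom_iff _).1 (hL (π y))
  have hp : (p : ZMod (p ^ 2)) * aeval (L (π y)) (derivative f) =
      p * aeval (L (π y)) (derivative g) :=
    natCast_mul_eq_natCast_mul_of_castHom_eq <| by rw [map_aeval_int, map_aeval_int, hL, hder]
  rw [hy, aeval_add_natCast_mul, aeval_add_natCast_mul, hfg]
  linear_combination t * hp

variable [Fact p.Prime]

theorem bijective_aeval_of_injective_of_derivative_ne_zero (f : ℤ[X])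
    (hinj : Injective fun x : ZMod p => aeval x f)
    (hder : ∀ x : ZMod p, aeval x (derivative f) ≠ 0) :
    Bijective fun y : ZMod (p ^ 2) => aeval y f := by
  refine Finite.injective_iff_bijective.1 fun y z hyz => ?_
  obtain ⟨t, rfl⟩ := (castHom_eq_castHom_iff _).1 <| hinj <| by
    simp only [← map_aeval_int]
    exact congrArg π hyz
  have hunit : IsUnit (aeval y (derivative f)) := by
    rw [isUnit_iff_castHom_ne_zero two_pos, map_aeval_int]
    exact hder _
  rw [aeval_add_natCast_mul, left_eq_add] at hyz
  rw [hunit.mul_right_eq_zero.1 hyz, add_zero]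

theorem exists_aeval_add_C_mul_eq (f : ℤ[X]) (L : ZMod p → ZMod (p ^ 2)) (hL : ∀ x, π (L x) = x)
    (v : ZMod p → ZMod (p ^ 2)) (hv : ∀ x, π (v x) = π (aeval (L x) f)) :
    ∃ e : ℤ[X], ∀ x, aeval (L x) (f + C (p : ℤ) * e) = v x := by
  choose w hw using fun x => (castHom_eq_castHom_iff _).1 (hv x).symm
  obtain ⟨e, he⟩ := exists_int_aeval_eq fun x => π (w x)
  refine ⟨e, fun x => ?_⟩
  rw [hw x, map_add, map_mul, aeval_C, algebraMap_int_eq, eq_intCast, Int.cast_natCast]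
  exact congrArg _ <| natCast_mul_eq_natCast_mul_of_castHom_eq <| by rw [map_aeval_int, hL, he]

theorem card_polyFunctions_with_reduction_and_derivative (α β : ZMod p → ZMod p) :
    Nat.card {g : ZMod (p ^ 2) → ZMod (p ^ 2) // ∃ f : ℤ[X], (g = fun x => aeval x f) ∧
      (∀ x : ZMod p, aeval x f = α x) ∧ ∀ x : ZMod p, aeval x (derivative f) = β x} = p ^ p := by
  obtain ⟨L, hL⟩ : ∃ L : ZMod p → ZMod (p ^ 2), ∀ x, π (L x) = x :=
    ⟨_, surjInv_eq (castHom_surjective _)⟩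
  have hlifts : Nat.card {v : ZMod p → ZMod (p ^ 2) // ∀ x, π (v x) = α x} = p ^ p := by
    rw [Nat.card_congr (Equiv.subtypePiEquivPi (p := fun x (z : ZMod (p ^ 2)) => π z = α x)),
      Nat.card_pi, Finset.prod_congr rfl fun x _ => card_fiber_castHom _ (α x),
      Finset.prod_const, Finset.card_univ, ZMod.card, sq,
      Nat.mul_div_cancel _ (Fact.out : p.Prime).pos]
  rw [← hlifts]
  refine Nat.card_congr (Equiv.ofBijective (fun g => ⟨fun x => g.1 (L x), fun x => ?_⟩) ⟨?_, ?_⟩)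
  · obtain ⟨f, hg, hf, -⟩ := g.2
    rw [hg, map_aeval_int, hL, hf]
  · rintro ⟨g₁, f₁, rfl, _, hf₁'⟩ ⟨g₂, f₂, rfl, _, hf₂'⟩ hres
    exact Subtype.ext <| funext <| aeval_eq_aeval_of_eq_on_section L hL
      (fun x => (hf₁' x).trans (hf₂' x).symm) (congrFun (congrArg Subtype.val hres))
  · rintro ⟨v, hv⟩
    obtain ⟨f, hf, hf'⟩ := exists_int_aeval_and_derivative_eq α β
    obtain ⟨e, he⟩ := exists_aeval_add_C_mul_eq f L hL v fun x => by
      rw [hv, map_aeval_int, hL, hf]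
    exact ⟨⟨_, f + C (p : ℤ) * e, rfl, by simp [hf], by simp [hf']⟩, Subtype.ext (funext he)⟩

end PrimeSquare

end ZMod

/-- For every pair `(α, β)` with `α : ℤ/pℤ → ℤ/pℤ` bijective and
`β : ℤ/pℤ → ℤ/pℤ∖{0}`, there are exactly `p^p` polynomial permutations
`[f]_{p²}` of `ℤ/p²ℤ` with `[f]_p = α` and `[f']_p = β`. -/
theorem card_polyPerm_with_reduction_and_derivative (p : ℕ) (hp : p.Prime)
    (α β : ZMod p → ZMod p) (hα : Function.Bijective α) (hβ : ∀ x, β x ≠ 0) :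
    Nat.card {g : ZMod (p ^ 2) → ZMod (p ^ 2) //
        Function.Bijective g ∧
        ∃ f : Polynomial ℤ,
          (g = fun x => Polynomial.aeval x f) ∧
          (∀ x : ZMod p, Polynomial.aeval x f = α x) ∧
          (∀ x : ZMod p, Polynomial.aeval x (Polynomial.derivative f) = β x)} =
      p ^ p := by
  have := Fact.mk hp
  rw [← ZMod.card_polyFunctions_with_reduction_and_derivative α β]
  refine Nat.card_congr (Equiv.subtypeEquivRight fun g => and_iff_right_of_imp ?_)
  rintro ⟨f, rfl, hf, hf'⟩
  refine ZMod.bijective_aeval_of_injective_of_derivative_ne_zero f ?_ fun x => hf' x ▸ hβ x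
  rw [show (fun x : ZMod p => aeval x f) = α from funext hf]
  exact hα.injective
end

section
/- Let p be a prime and let C_0 be the subgroup of Sym(ℤ/pℤ) generated by the p-cycle (0 1 2 … p−1). Then S = {(f, 1) ∈ H : f ∈ C_0} (where 1 denotes the constant function 1) is a Sylow p-subgroup of H; its normalizer in H is N_H(S) = {(g, g′) ∈ H : there exists k ≠ 0 in ℤ/pℤ with g(a) − g(b) = k·(a − b) for all a, b ∈ ℤ/pℤ, and g′ is a nonzero constant function}; and |N_H(S)| = p·(p−1)², so the index of N_H(S) in H is (p−1)!·(p−1)^{p−2}. -/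
/-- The group `H`: pairs `(f, f')` with `f` a permutation of `ℤ/pℤ` and
`f' : ℤ/pℤ → ℤ/pℤ∖{0}` an arbitrary function (encoded as taking values in the
units `(ℤ/pℤ)ˣ`), with multiplication `(f,f')∘(g,g') = (f∘g, (f'∘g)·g')`. -/
@[ext]
structure Hgrp (p : ℕ) where
  perm : Equiv.Perm (ZMod p)
  der : ZMod p → (ZMod p)ˣ

namespace Hgrp

instance (p : ℕ) : Group (Hgrp p) where
  mul a b := ⟨a.perm * b.perm, fun x => a.der (b.perm x) * b.der x⟩
  one := ⟨1, 1⟩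
  inv a := ⟨a.perm⁻¹, fun x => (a.der (a.perm⁻¹ x))⁻¹⟩
  mul_assoc a b c := by
    refine Hgrp.ext (mul_assoc _ _ _) ?_
    funext x
    exact mul_assoc _ _ _
  one_mul a := by
    refine Hgrp.ext (one_mul _) ?_
    funext x
    exact one_mul _
  mul_one a := by
    refine Hgrp.ext (mul_one _) ?_
    funext x
    exact mul_one _
  inv_mul_cancel a := by
    refine Hgrp.ext (inv_mul_cancel _) ?_
    funext x
    show (a.der (a.perm⁻¹ (a.perm x)))⁻¹ * a.der x = 1
    rw [Equiv.Perm.inv_def, Equiv.symm_apply_apply, inv_mul_cancel]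

theorem mul_def {p : ℕ} (a b : Hgrp p) :
    a * b = ⟨a.perm * b.perm, fun x => a.der (b.perm x) * b.der x⟩ := rfl

theorem one_def {p : ℕ} : (1 : Hgrp p) = ⟨1, 1⟩ := rfl

end Hgrp

/-! Since `|H| = p!·(p-1)^p` and `S ≅ ℤ/pℤ`, `S` is a Sylow `p`-subgroup because
`p ∤ (p-1)!·(p-1)^p`. As `S` is generated by `σ = (x ↦ x + 1, 1)`, an element `(g, g')` normalizes
`S` exactly when its conjugate of `σ` lies in `S`: the permutation part says
`g (x + 1) = g x + k`, i.e. `g` is affine, and the other part says `g' (x + 1) = g' x`, i.e. `g'`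
is constant, because a function on `ℤ/nℤ` invariant under `x ↦ x + 1` is constant. Counting the
pairs `(x ↦ k x + b, u)` gives `|N_H(S)| = p·(p-1)²`. -/

open Equiv Subgroup Nat

theorem Equiv.Perm.mul_addRight_mul_inv_eq_addRight_iff {A : Type*} [AddGroup A] (g : Perm A)
    (c k : A) : g * Equiv.addRight c * g⁻¹ = Equiv.addRight k ↔ ∀ x, g (x + c) = g x + k := by
  constructor
  · intro h x
    simpa using congr($h (g x))
  · intro h
    ext y
    simpa using h (g⁻¹ y)

theorem Subgroup.index_eq_of_card_eq_mul {G : Type*} [Group G] [Finite G] {K : Subgroup G}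
    {m : ℕ} (h : Nat.card G = Nat.card K * m) : K.index = m :=
  Nat.eq_of_mul_eq_mul_left Nat.card_pos (K.card_mul_index.trans h)

theorem Nat.Prime.not_dvd_factorial_pred_mul_pow {p : ℕ} (hp : p.Prime) (k : ℕ) :
    ¬ p ∣ (p - 1)! * (p - 1) ^ k := by
  have hp2 := hp.two_le
  intro hd
  rcases hp.dvd_mul.mp hd with hd | hd
  · exact absurd (hp.dvd_factorial.mp hd) (by omega)
  · exact absurd (Nat.le_of_dvd (by omega) (hp.dvd_of_dvd_pow hd)) (by omega)

namespace ZMod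

variable {n : ℕ}

theorem eq_of_periodic_one {α : Type*} {f : ZMod n → α} (hf : Function.Periodic f 1)
    (x y : ZMod n) : f x = f y := by
  obtain ⟨a, rfl⟩ := intCast_surjective x
  obtain ⟨b, rfl⟩ := intCast_surjective y
  simpa using (hf.int_mul_eq a).trans (hf.int_mul_eq b).symm

theorem forall_apply_add_one_eq_iff (g : ZMod n → ZMod n) (k : ZMod n) :
    (∀ x, g (x + 1) = g x + k) ↔ ∀ a b, g a - g b = k * (a - b) := by
  constructor
  · intro hg a b
    have hper : Function.Periodic (fun x => g x - k * x) 1 := fun x => by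
      simp only [hg]
      ring
    linear_combination eq_of_periodic_one hper a b
  · intro hg x
    linear_combination hg (x + 1) x

theorem mem_zpowers_addRight_one {f : Perm (ZMod n)} :
    f ∈ zpowers (Equiv.addRight (1 : ZMod n)) ↔ ∃ c, Equiv.addRight c = f := by
  simp only [mem_zpowers_iff, zsmul_addRight, zsmul_one]
  exact (intCast_surjective.exists (p := fun c => Equiv.addRight c = f)).symm

end ZMod

namespace Hgrp

variable {n : ℕ}

@[simp] theorem perm_mul (a b : Hgrp n) : (a * b).perm = a.perm * b.perm := rfl

@[simp] theorem der_mul (a b : Hgrp n) (x : ZMod n) :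
    (a * b).der x = a.der (b.perm x) * b.der x := rfl

@[simp] theorem perm_inv (a : Hgrp n) : a⁻¹.perm = a.perm⁻¹ := rfl

@[simp] theorem der_inv (a : Hgrp n) (x : ZMod n) : a⁻¹.der x = (a.der (a.perm⁻¹ x))⁻¹ := rfl



variable (n) in
def equivProd : Hgrp n ≃ Perm (ZMod n) × (ZMod n → (ZMod n)ˣ) where
  toFun h := (h.perm, h.der)
  invFun x := ⟨x.1, x.2⟩

instance [NeZero n] : Finite (Hgrp n) := .of_equiv _ (equivProd n).symm

theorem card_eq [NeZero n] : Nat.card (Hgrp n) = n ! * Nat.card (ZMod n)ˣ ^ n := by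
  rw [Nat.card_congr (equivProd n), Nat.card_prod, Nat.card_perm, Nat.card_fun, Nat.card_zmod]

variable (n) in
def translationSubgroup : Subgroup (Hgrp n) where
  carrier := {h | h.perm ∈ zpowers (Equiv.addRight (1 : ZMod n)) ∧ h.der = 1}
  one_mem' := ⟨one_mem _, rfl⟩
  mul_mem' := by
    rintro a b ⟨ha, ha'⟩ ⟨hb, hb'⟩
    exact ⟨mul_mem ha hb, by ext x; simp [ha', hb']⟩
  inv_mem' := by
    rintro a ⟨ha, ha'⟩
    exact ⟨inv_mem ha, by ext x; simp [ha']⟩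

def translation (c : ZMod n) : Hgrp n := ⟨Equiv.addRight c, 1⟩

theorem translation_injective : Function.Injective (translation (n := n)) := fun c d h => by
  simpa [translation] using congrArg (fun g : Hgrp n => g.perm 0) h

theorem translation_mem (c : ZMod n) : translation c ∈ translationSubgroup n :=
  ⟨ZMod.mem_zpowers_addRight_one.mpr ⟨c, rfl⟩, rfl⟩

theorem coe_translationSubgroup :
    (translationSubgroup n : Set (Hgrp n)) = Set.range translation := by
  ext h
  simp only [translationSubgroup, coe_set_mk, ZMod.mem_zpowers_addRight_one,
    Set.mem_range, translation]
  constructor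
  · rintro ⟨⟨c, hc⟩, hder⟩
    exact ⟨c, by ext <;> simp [hc, hder]⟩
  · rintro ⟨c, rfl⟩
    exact ⟨⟨c, rfl⟩, rfl⟩

theorem card_translationSubgroup : Nat.card (translationSubgroup n) = n := by
  rw [← SetLike.coe_sort_coe, coe_translationSubgroup, Nat.card_range_of_injective
    translation_injective, Nat.card_zmod]

theorem index_translationSubgroup [NeZero n] :
    (translationSubgroup n).index = (n - 1)! * Nat.card (ZMod n)ˣ ^ n := by
  refine index_eq_of_card_eq_mul ?_
  rw [card_eq, card_translationSubgroup, ← mul_assoc, Nat.mul_factorial_pred (NeZero.ne n)]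

variable (n) in
def affineSet : Set (Hgrp n) :=
  {h | (∃ k : ZMod n, k ≠ 0 ∧ ∀ a b : ZMod n, h.perm a - h.perm b = k * (a - b)) ∧
    ∃ u : (ZMod n)ˣ, h.der = fun _ => u}

theorem mem_affineSet_of_mem_normalizer [Nontrivial (ZMod n)] {h : Hgrp n}
    (hh : h ∈ normalizer (translationSubgroup n : Set (Hgrp n))) : h ∈ affineSet n := by
  obtain ⟨hperm, hder⟩ := (mem_normalizer_iff.mp hh (translation 1)).mp (translation_mem 1)
  obtain ⟨k, hk⟩ := ZMod.mem_zpowers_addRight_one.mp hperm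
  have hstep : ∀ x, h.perm (x + 1) = h.perm x + k :=
    (Perm.mul_addRight_mul_inv_eq_addRight_iff _ _ _).mp (by simpa [translation] using hk.symm)
  have hperiodic : Function.Periodic h.der 1 := fun x => by
    simpa [translation, mul_inv_eq_one] using congrFun hder (h.perm x)
  have hk0 : k ≠ 0 := fun hk0 => one_ne_zero (h.perm.injective (by simpa [hk0] using hstep 0))
  exact ⟨⟨k, hk0, (ZMod.forall_apply_add_one_eq_iff _ _).mp hstep⟩, h.der 0,
    funext fun x => ZMod.eq_of_periodic_one hperiodic x 0⟩

theorem mem_normalizer_of_mem_affineSet [NeZero n] {h : Hgrp n} (hh : h ∈ affineSet n) :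
    h ∈ normalizer (translationSubgroup n : Set (Hgrp n)) := by
  obtain ⟨⟨k, -, hk⟩, u, hu⟩ := hh
  refine mem_normalizer_fintype fun s ⟨hsperm, hsder⟩ => ⟨?_, ?_⟩
  · obtain ⟨c, hc⟩ := ZMod.mem_zpowers_addRight_one.mp hsperm
    refine ZMod.mem_zpowers_addRight_one.mpr ⟨k * c, ?_⟩
    rw [perm_mul, perm_mul, perm_inv, ← hc, eq_comm, Perm.mul_addRight_mul_inv_eq_addRight_iff]
    intro x
    linear_combination hk (x + c) x
  · ext x
    simp [hu, hsder]

theorem coe_normalizer_translationSubgroup [NeZero n] [Nontrivial (ZMod n)] :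
    (normalizer (translationSubgroup n : Set (Hgrp n)) : Set (Hgrp n)) = affineSet n :=
  Set.ext fun _ => ⟨mem_affineSet_of_mem_normalizer, mem_normalizer_of_mem_affineSet⟩

def affine (t : (ZMod n)ˣ × ZMod n × (ZMod n)ˣ) : Hgrp n :=
  ⟨(Units.mulLeft t.1).trans (Equiv.addRight t.2.1), fun _ => t.2.2⟩

@[simp] theorem perm_affine_apply (t : (ZMod n)ˣ × ZMod n × (ZMod n)ˣ) (x : ZMod n) :
    (affine t).perm x = t.1 * x + t.2.1 := rfl

@[simp] theorem der_affine (t : (ZMod n)ˣ × ZMod n × (ZMod n)ˣ) :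
    (affine t).der = fun _ => t.2.2 := rfl

theorem affine_injective : Function.Injective (affine (n := n)) := by
  rintro ⟨k, b, u⟩ ⟨k', b', u'⟩ h
  have h0 := congrArg (fun g : Hgrp n => g.perm 0) h
  have h1 := congrArg (fun g : Hgrp n => g.perm 1) h
  have hu := congrArg (fun g : Hgrp n => g.der 0) h
  simp only [perm_affine_apply, der_affine] at h0 h1 hu
  simp_all [Units.ext_iff]

theorem range_affine [Nontrivial (ZMod n)] : Set.range (affine (n := n)) = affineSet n := by
  ext h
  constructor
  · rintro ⟨⟨k, b, u⟩, rfl⟩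
    exact ⟨⟨k, k.ne_zero, fun a b => by simp only [perm_affine_apply]; ring⟩, u, rfl⟩
  · rintro ⟨⟨k, -, hk⟩, u, hu⟩
    obtain ⟨a, ha⟩ := h.perm.surjective (h.perm 0 + 1)
    have hunit : IsUnit k := .of_mul_eq_one a (by linear_combination ha - hk a 0)
    refine ⟨(hunit.unit, h.perm 0, u), ?_⟩
    ext x
    · simp only [perm_affine_apply, IsUnit.unit_spec]
      linear_combination -hk x 0
    · simp [hu]

theorem card_normalizer_translationSubgroup [NeZero n] [Nontrivial (ZMod n)] :
    Nat.card (normalizer (translationSubgroup n : Set (Hgrp n))) =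
      n * Nat.card (ZMod n)ˣ ^ 2 := by
  rw [← SetLike.coe_sort_coe, coe_normalizer_translationSubgroup, ← range_affine,
    Nat.card_range_of_injective affine_injective, Nat.card_prod, Nat.card_prod, Nat.card_zmod]
  ring

theorem index_normalizer_translationSubgroup [NeZero n] [Nontrivial (ZMod n)] :
    (normalizer (translationSubgroup n : Set (Hgrp n))).index =
      (n - 1)! * Nat.card (ZMod n)ˣ ^ (n - 2) := by
  have hn : 2 ≤ n := by
    have := ZMod.nontrivial_iff.mp ‹_›
    have := NeZero.ne n
    omega
  refine index_eq_of_card_eq_mul ?_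
  rw [card_eq, card_normalizer_translationSubgroup, ← Nat.mul_factorial_pred (NeZero.ne n)]
  obtain ⟨m, rfl⟩ := Nat.exists_eq_add_of_le hn
  simp only [add_tsub_cancel_left, pow_add]
  ring

end Hgrp

/-- Let `C₀` be the subgroup of the symmetric group on `ℤ/pℤ` generated by the
`p`-cycle `(0 1 2 … p-1)` (i.e. `x ↦ x + 1`).  Then
`S = {(f, 1) ∈ H : f ∈ C₀}` is a Sylow `p`-subgroup of `H`, its normalizer is
`N_H(S) = {(g, g') ∈ H : ∃ k ≠ 0, g(a) - g(b) = k(a-b) for all a b, and g'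
is a (nonzero) constant}`, the normalizer has order `p·(p-1)²`, and its index
in `H` is `(p-1)!·(p-1)^{p-2}`. -/
theorem sylow_of_H_and_normalizer (p : ℕ) [Fact p.Prime] :
    ∃ P : Sylow p (Hgrp p),
      ((P : Subgroup (Hgrp p)) : Set (Hgrp p)) =
        {h : Hgrp p |
          h.perm ∈ Subgroup.zpowers (Equiv.addRight (1 : ZMod p)) ∧ h.der = 1} ∧
      (Subgroup.normalizer ((P : Subgroup (Hgrp p)) : Set (Hgrp p)) : Set (Hgrp p)) =
        {h : Hgrp p |
          (∃ k : ZMod p, k ≠ 0 ∧ ∀ a b : ZMod p, h.perm a - h.perm b = k * (a - b)) ∧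
          ∃ u : (ZMod p)ˣ, h.der = fun _ => u} ∧
      Nat.card (Subgroup.normalizer ((P : Subgroup (Hgrp p)) : Set (Hgrp p))) = p * (p - 1) ^ 2 ∧
      (Subgroup.normalizer ((P : Subgroup (Hgrp p)) : Set (Hgrp p))).index =
        Nat.factorial (p - 1) * (p - 1) ^ (p - 2) := by
  have hp : p.Prime := Fact.out
  have card_units : Nat.card (ZMod p)ˣ = p - 1 := by rw [Nat.card_units, Nat.card_zmod]
  have hpgroup : IsPGroup p (Hgrp.translationSubgroup p) :=
    .of_card (n := 1) (by rw [Hgrp.card_translationSubgroup, pow_one])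
  have hindex : ¬ p ∣ (Hgrp.translationSubgroup p).index := by
    rw [Hgrp.index_translationSubgroup, card_units]
    exact hp.not_dvd_factorial_pred_mul_pow p
  refine ⟨hpgroup.toSylow hindex, rfl, Hgrp.coe_normalizer_translationSubgroup, ?_, ?_⟩
  · exact Hgrp.card_normalizer_translationSubgroup.trans (by rw [card_units])
  · exact Hgrp.index_normalizer_translationSubgroup.trans (by rw [card_units])
end
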